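/- Let p be a prime and let H(z) = ∑_{m≥0} a_m z^m ∈ ℤ_p⟨z⟩ be non-constant, and let L ≥ 1 be an index such that |a_L|_p > |a_j|_p for all j > L. Then there exists a constant c₂ > 0 such that for every t ∈ ℤ_p the following holds: if n₁, …, n_{L+1} are distinct natural numbers with |H(n_i) − t|_p ≤ p^{−n_i} for each i, then there exist indices k₁ ≠ k₂ such that |n_{k₁} − n_{k₂}|_p < c₂·p^{−min(n_{k₁}, n_{k₂})/L}. -/

import Mathlib

/-!
Write `x_i` for the nodes `n_i` and `σ_m = [x_0, …, x_L] z^m` for the divided difference of `z^m`.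
It vanishes for `m < L`, equals `1` for `m = L`, and is a `p`-adic integer for every `m`, being
the coefficient of `z^L` in the remainder of `z^m` modulo the monic `∏ (z - x_i) ∈ ℤ_p[z]`.
So the divided difference of `H - t` at the nodes is `∑ a_m σ_m`, whose norm is exactly `|a_L|`,
since every later term has norm at most `|a_L| / p`. Written as
`∑_i (H(x_i) - t) / ∏_{j ≠ i} (x_i - x_j)`, one of its terms has norm at least `|a_L|`, so
`|a_L| ∏_{j ≠ i} |x_i - x_j| ≤ p^{-n_i}`, and the node nearest to `x_i` lies within
`(p^{-n_i} / |a_L|)^{1/L}` of it.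
-/

open Filter

/-- A sequence of coefficients in `ℤ_p` is strictly convergent if `|a_m|_p → 0`;
such a sequence is the coefficient sequence of an element of the Tate algebra `ℤ_p⟨z⟩`. -/
def StrictlyConvergent {p : ℕ} [Fact p.Prime] (a : ℕ → ℤ_[p]) : Prop :=
  Tendsto (fun m => ‖a m‖) atTop (nhds 0)

/-- Evaluation of a strictly convergent power series (given by its coefficients) at a point
of `ℤ_p`. -/
noncomputable def scEval {p : ℕ} [Fact p.Prime] (a : ℕ → ℤ_[p]) (x : ℤ_[p]) : ℤ_[p] :=
  ∑' m : ℕ, a m * x ^ m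

open Polynomial Finset

namespace Lagrange

variable {ι : Type*}

/-- The divided difference of `X ^ m` at the nodes `v i`, `i ∈ s`, computed as the coefficient of
`X ^ (#s - 1)` in the remainder of `X ^ m` modulo `∏ i ∈ s, (X - v i)`; in this form it lies in
`R` itself, not only in a field containing `R`. -/
noncomputable def dividedDiffPow {R : Type*} [CommRing R] (s : Finset ι) (v : ι → R) (m : ℕ) :
    R :=
  (X ^ m %ₘ nodal s v).coeff (#s - 1)

theorem dividedDiffPow_of_lt_card {R : Type*} [CommRing R] [Nontrivial R] {s : Finset ι}
    (v : ι → R) {m : ℕ} (hm : m < #s) :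
    dividedDiffPow s v m = if m = #s - 1 then 1 else 0 := by
  rw [dividedDiffPow, (modByMonic_eq_self_iff nodal_monic).mpr, coeff_X_pow]
  · simp only [eq_comm]
  · rw [degree_X_pow, degree_nodal]
    exact_mod_cast hm

theorem map_dividedDiffPow [DecidableEq ι] {R K : Type*} [CommRing R] [Field K] (f : R →+* K)
    {s : Finset ι} {v : ι → R} (hv : Set.InjOn (f ∘ v) s) (m : ℕ) :
    f (dividedDiffPow s v m) = ∑ i ∈ s, f (v i) ^ m / ∏ j ∈ s.erase i, (f (v i) - f (v j)) := by
  have hnodal : (nodal s v).map f = nodal s (f ∘ v) := by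
    simp [nodal_eq, Polynomial.map_prod]
  rw [dividedDiffPow, ← coeff_map, map_modByMonic f nodal_monic, hnodal, Polynomial.map_pow,
    map_X, coeff_eq_sum hv ((degree_modByMonic_lt _ nodal_monic).trans_eq degree_nodal)]
  refine sum_congr rfl fun i hi => ?_
  rw [modByMonic_eq_sub_mul_div, eval_sub, eval_mul, eval_nodal_at_node (v := f ∘ v) hi]
  simp

end Lagrange

theorem Finset.exists_pow_card_le_prod {ι R : Type*} [CommSemiring R] [LinearOrder R]
    [IsOrderedRing R] {s : Finset ι} (hs : s.Nonempty) {f : ι → R} (hf : ∀ i ∈ s, 0 ≤ f i) :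
    ∃ j ∈ s, f j ^ #s ≤ ∏ i ∈ s, f i := by
  obtain ⟨j, hj, hmin⟩ := s.exists_min_image f hs
  refine ⟨j, hj, ?_⟩
  rw [← prod_const]
  exact prod_le_prod (fun _ _ => hf j hj) hmin

theorem le_mul_rpow_inv_of_pow_mul_le {d A B : ℝ} {L : ℕ} (hd : 0 ≤ d) (hA : 0 < A)
    (hL : L ≠ 0) (h : d ^ L * A ≤ B) : d ≤ A ^ (-(L : ℝ)⁻¹) * B ^ (L : ℝ)⁻¹ := by
  have hdL : d ^ L ≤ B / A := (le_div_iff₀ hA).mpr h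
  have hB : 0 ≤ B := (mul_nonneg (pow_nonneg hd L) hA.le).trans h
  calc d = (d ^ L) ^ (L : ℝ)⁻¹ := (Real.pow_rpow_inv_natCast hd hL).symm
    _ ≤ (B / A) ^ (L : ℝ)⁻¹ := by gcongr
    _ = A ^ (-(L : ℝ)⁻¹) * B ^ (L : ℝ)⁻¹ := by
      rw [Real.div_rpow hB hA.le, Real.rpow_neg hA.le, div_eq_inv_mul]

theorem IsUltrametricDist.norm_tsum_eq_of_forall_ne_le {G β : Type*} [NormedAddCommGroup G]
    [IsUltrametricDist G] [DecidableEq β] {f : β → G} (hf : Summable f) {b : β} {C : ℝ}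
    (hC0 : 0 ≤ C) (hC : C < ‖f b‖) (h : ∀ i ≠ b, ‖f i‖ ≤ C) :
    ‖∑' i, f i‖ = ‖f b‖ := by
  have hrest : ‖∑' i, if i = b then 0 else f i‖ ≤ C :=
    norm_tsum_le_of_forall_le_of_nonneg hC0 fun i => by
      split_ifs with hi
      · simpa using hC0
      · exact h i hi
  rw [hf.tsum_eq_add_tsum_ite b, norm_add_eq_max_of_norm_ne_norm (hrest.trans_lt hC).ne',
    max_eq_left (hrest.trans hC.le)]

theorem exists_norm_sub_pow_mul_norm_sum_div_le {ι K : Type*} [DecidableEq ι] [NormedField K]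
    [IsUltrametricDist K] {s : Finset ι} (hs : 1 < #s) (v r : ι → K) :
    ∃ i ∈ s, ∃ j ∈ s, j ≠ i ∧
      ‖v i - v j‖ ^ (#s - 1) * ‖∑ k ∈ s, r k / ∏ l ∈ s.erase k, (v k - v l)‖ ≤ ‖r i‖ := by
  obtain ⟨i, hi, hsum⟩ := IsUltrametricDist.exists_norm_finsetSum_le_of_nonempty
    (card_pos.mp (by omega : 0 < #s)) fun k => r k / ∏ l ∈ s.erase k, (v k - v l)
  have herase : (s.erase i).Nonempty := card_pos.mp (by rw [card_erase_of_mem hi]; omega)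
  obtain ⟨j, hj, hjmin⟩ := exists_pow_card_le_prod herase (f := fun l => ‖v i - v l‖)
    fun _ _ => norm_nonneg _
  refine ⟨i, hi, j, mem_of_mem_erase hj, ne_of_mem_erase hj, ?_⟩
  rw [card_erase_of_mem hi] at hjmin
  rw [norm_div, norm_prod] at hsum
  calc ‖v i - v j‖ ^ (#s - 1) * ‖∑ k ∈ s, r k / ∏ l ∈ s.erase k, (v k - v l)‖
      ≤ (∏ l ∈ s.erase i, ‖v i - v l‖) * ‖∑ k ∈ s, r k / ∏ l ∈ s.erase k, (v k - v l)‖ := by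
        gcongr
    _ ≤ ‖r i‖ := by
        rcases (prod_nonneg fun l _ => norm_nonneg (v i - v l)).eq_or_lt with h0 | hpos
        · rw [← h0, zero_mul]
          exact norm_nonneg _
        · rwa [le_div_iff₀' hpos] at hsum

theorem PadicInt.norm_le_norm_div_of_norm_lt {p : ℕ} [Fact p.Prime] {x y : ℤ_[p]}
    (h : ‖x‖ < ‖y‖) : ‖x‖ ≤ ‖y‖ / p := by
  have hy : y ≠ 0 := by
    rintro rfl
    exact (norm_nonneg x).not_gt (by simpa using h)
  rw [norm_eq_zpow_neg_valuation hy, norm_lt_pow_iff_norm_le_pow_sub_one] at *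
  rwa [zpow_sub_one₀ (by exact_mod_cast (Fact.out : p.Prime).ne_zero), ← div_eq_mul_inv] at h

namespace StrictlyConvergent

open Lagrange

variable {p : ℕ} [Fact p.Prime] {a : ℕ → ℤ_[p]}

theorem summable_mul (ha : StrictlyConvergent a) (b : ℕ → ℤ_[p]) :
    Summable fun m => a m * b m := by
  apply NonarchimedeanAddGroup.summable_of_tendsto_cofinite_zero
  rw [Nat.cofinite_eq_atTop]
  refine squeeze_zero_norm (fun m => ?_) ha
  rw [norm_mul]
  exact mul_le_of_le_one_right (norm_nonneg _) (PadicInt.norm_le_one _)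

theorem hasSum_coe_mul (ha : StrictlyConvergent a) (b : ℕ → ℤ_[p]) :
    HasSum (fun m => ((a m * b m : ℤ_[p]) : ℚ_[p])) (∑' m, a m * b m : ℤ_[p]) :=
  (ha.summable_mul b).hasSum.map PadicInt.Coe.ringHom continuous_subtype_val

theorem sum_scEval_sub_div_prod {ι : Type*} [DecidableEq ι] (ha : StrictlyConvergent a)
    {s : Finset ι} (hs : 2 ≤ #s) {v : ι → ℤ_[p]} (hv : Set.InjOn v s) (t : ℤ_[p]) :
    ∑ i ∈ s, ((scEval a (v i) - t : ℤ_[p]) : ℚ_[p]) / ∏ j ∈ s.erase i, ((v i : ℚ_[p]) - v j) =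
      ((∑' m, a m * dividedDiffPow s v m : ℤ_[p]) : ℚ_[p]) := by
  set D : ι → ℚ_[p] := fun i => ∏ j ∈ s.erase i, ((v i : ℚ_[p]) - v j)
  have hσ : ∀ m, ((dividedDiffPow s v m : ℤ_[p]) : ℚ_[p]) = ∑ i ∈ s, (v i : ℚ_[p]) ^ m / D i :=
    map_dividedDiffPow PadicInt.Coe.ringHom (Subtype.val_injective.comp_injOn hv)
  have hσ₀ : dividedDiffPow s v 0 = 0 := by
    rw [dividedDiffPow_of_lt_card v (by omega), if_neg (by omega)]
  have hweights : ∑ i ∈ s, (D i)⁻¹ = 0 := by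
    simpa [hσ₀] using (hσ 0).symm
  have hterms : (fun m => ((a m * dividedDiffPow s v m : ℤ_[p]) : ℚ_[p])) =
      fun m => ∑ i ∈ s, ((a m * v i ^ m : ℤ_[p]) : ℚ_[p]) / D i := by
    funext m
    rw [PadicInt.coe_mul, hσ, mul_sum]
    refine sum_congr rfl fun i _ => ?_
    rw [PadicInt.coe_mul, PadicInt.coe_pow, mul_div_assoc]
  have hsum := hasSum_sum fun i (_ : i ∈ s) => (ha.hasSum_coe_mul (v i ^ ·)).div_const (D i)
  rw [← hterms] at hsum
  rw [(ha.hasSum_coe_mul _).unique hsum]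
  simp only [PadicInt.coe_sub, sub_div, sum_sub_distrib, scEval]
  simp_rw [div_eq_mul_inv (t : ℚ_[p]), ← mul_sum]
  rw [hweights, mul_zero, sub_zero]

theorem norm_tsum_mul_dividedDiffPow {ι : Type*} (ha : StrictlyConvergent a) {s : Finset ι}
    (v : ι → ℤ_[p]) {L : ℕ} (hs : #s = L + 1) (hLmax : ∀ j, L < j → ‖a j‖ < ‖a L‖) :
    ‖∑' m, a m * dividedDiffPow s v m‖ = ‖a L‖ := by
  have hσ : ∀ m ≤ L, dividedDiffPow s v m = if m = L then 1 else 0 := fun m hm => by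
    rw [dividedDiffPow_of_lt_card v (by omega), hs, Nat.add_sub_cancel]
  have haL : 0 < ‖a L‖ := (norm_nonneg _).trans_lt (hLmax (L + 1) L.lt_succ_self)
  have hp : (1 : ℝ) < p := by exact_mod_cast (Fact.out : p.Prime).one_lt
  have hfL : a L * dividedDiffPow s v L = a L := by simp [hσ L le_rfl]
  have hC : ‖a L‖ / p < ‖a L * dividedDiffPow s v L‖ := by
    rw [hfL]
    exact div_lt_self haL hp
  have hrest : ∀ m ≠ L, ‖a m * dividedDiffPow s v m‖ ≤ ‖a L‖ / p := fun m hm => by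
    rcases lt_or_gt_of_ne hm with hlt | hgt
    · simp only [hσ m hlt.le, if_neg hlt.ne, mul_zero, norm_zero]
      positivity
    · calc ‖a m * dividedDiffPow s v m‖ ≤ ‖a m‖ :=
            (norm_mul_le _ _).trans (mul_le_of_le_one_right (norm_nonneg _) (PadicInt.norm_le_one _))
        _ ≤ ‖a L‖ / p := PadicInt.norm_le_norm_div_of_norm_lt (hLmax m hgt)
  rw [IsUltrametricDist.norm_tsum_eq_of_forall_ne_le (ha.summable_mul _) (by positivity) hC hrest,
    hfL]

theorem exists_norm_sub_pow_mul_le {ι : Type*} [DecidableEq ι] (ha : StrictlyConvergent a)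
    {L : ℕ} (hL : 1 ≤ L) (hLmax : ∀ j, L < j → ‖a j‖ < ‖a L‖) {s : Finset ι} (hs : #s = L + 1)
    {v : ι → ℤ_[p]} (hv : Set.InjOn v s) (t : ℤ_[p]) :
    ∃ i ∈ s, ∃ j ∈ s, j ≠ i ∧ ‖v i - v j‖ ^ L * ‖a L‖ ≤ ‖scEval a (v i) - t‖ := by
  obtain ⟨i, hi, j, hj, hji, hij⟩ := exists_norm_sub_pow_mul_norm_sum_div_le (s := s) (by omega)
    (fun i => (v i : ℚ_[p])) (fun i => ((scEval a (v i) - t : ℤ_[p]) : ℚ_[p]))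
  refine ⟨i, hi, j, hj, hji, ?_⟩
  rw [ha.sum_scEval_sub_div_prod (by omega) hv, ← PadicInt.coe_sub] at hij
  simpa only [PadicInt.padic_norm_e_of_padicInt, ha.norm_tsum_mul_dividedDiffPow v hs hLmax, hs,
    Nat.add_sub_cancel] using hij

end StrictlyConvergent

theorem padic_proximity_of_approximate_roots_general
    (p : ℕ) [Fact p.Prime] (a : ℕ → ℤ_[p]) (ha : StrictlyConvergent a)
    (L : ℕ) (hL : 1 ≤ L) (hLmax : ∀ j : ℕ, L < j → ‖a j‖ < ‖a L‖) :
    ∃ c₂ : ℝ, 0 < c₂ ∧ ∀ t : ℤ_[p], ∀ n : Fin (L + 1) → ℕ, Function.Injective n →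
      (∀ i, ‖scEval a (n i : ℤ_[p]) - t‖ ≤ (p : ℝ) ^ (-(n i : ℤ))) →
      ∃ k₁ k₂ : Fin (L + 1), k₁ ≠ k₂ ∧
        ‖((n k₁ : ℤ_[p]) - (n k₂ : ℤ_[p]))‖ <
          c₂ * (p : ℝ) ^ (-((min (n k₁) (n k₂) : ℝ)) / (L : ℝ)) := by
  have haL : 0 < ‖a L‖ := (norm_nonneg _).trans_lt (hLmax (L + 1) L.lt_succ_self)
  have hp : (1 : ℝ) < p := by exact_mod_cast (Fact.out : p.Prime).one_lt
  refine ⟨‖a L‖ ^ (-(L : ℝ)⁻¹) + 1, by positivity, fun t n hn hnt => ?_⟩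
  obtain ⟨i, -, j, -, hji, hij⟩ := ha.exists_norm_sub_pow_mul_le hL hLmax (s := univ) (by simp)
    (v := fun i => (n i : ℤ_[p])) (Nat.cast_injective.comp hn).injOn t
  refine ⟨i, j, hji.symm, ?_⟩
  calc ‖(n i : ℤ_[p]) - n j‖
      ≤ ‖a L‖ ^ (-(L : ℝ)⁻¹) * ((p : ℝ) ^ (-(n i : ℤ))) ^ (L : ℝ)⁻¹ :=
        le_mul_rpow_inv_of_pow_mul_le (norm_nonneg _) haL (by omega) (hij.trans (hnt i))
    _ ≤ ‖a L‖ ^ (-(L : ℝ)⁻¹) * (p : ℝ) ^ (-((min (n i) (n j) : ℝ)) / (L : ℝ)) := by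
        gcongr
        rw [← Real.rpow_intCast, ← Real.rpow_mul (by positivity), div_eq_mul_inv]
        apply Real.rpow_le_rpow_of_exponent_le hp.le
        push_cast
        gcongr
        exact min_le_left _ _
    _ < _ := mul_lt_mul_of_pos_right (lt_add_one _) (Real.rpow_pos_of_pos (by linarith) _)

/-- let `H = ∑ a_m z^m ∈ ℤ_p⟨z⟩` be non-constant and `L ≥ 1` an index with
`|a_L|_p > |a_j|_p` for all `j > L`.  Then there is `c₂ > 0` such that for every `t ∈ ℤ_p`,
among any `L + 1` distinct natural numbers `n_i` with `|H(n_i) - t|_p ≤ p^{-n_i}` there are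
two, `n_{k₁} ≠ n_{k₂}`, with `|n_{k₁} - n_{k₂}|_p < c₂ p^{-min(n_{k₁}, n_{k₂})/L}`. -/
theorem padic_proximity_of_approximate_roots
    (p : ℕ) [Fact p.Prime] (a : ℕ → ℤ_[p]) (ha : StrictlyConvergent a)
    (hnc : ∃ m : ℕ, 0 < m ∧ a m ≠ 0)
    (L : ℕ) (hL : 1 ≤ L) (hLmax : ∀ j : ℕ, L < j → ‖a j‖ < ‖a L‖) :
    ∃ c₂ : ℝ, 0 < c₂ ∧ ∀ t : ℤ_[p], ∀ n : Fin (L + 1) → ℕ, Function.Injective n →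
      (∀ i, ‖scEval a (n i : ℤ_[p]) - t‖ ≤ (p : ℝ) ^ (-(n i : ℤ))) →
      ∃ k₁ k₂ : Fin (L + 1), k₁ ≠ k₂ ∧
        ‖((n k₁ : ℤ_[p]) - (n k₂ : ℤ_[p]))‖ <
          c₂ * (p : ℝ) ^ (-((min (n k₁) (n k₂) : ℝ)) / (L : ℝ)) :=
  padic_proximity_of_approximate_roots_general p a ha L hL hLmax
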